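/- Every x ∈ c₀^λ(F̂) has a unique representation x = ∑_k α_k b^{(k)} converging in the norm ‖·‖ = sup_n |F̄_n(·)|, where α_k = F̄_k(x); that is, the sequence (b^{(k)}) is a Schauder basis of c₀^λ(F̂). -/

import Mathlib

open Filter Finset

/-!
`Fbar Λ · n` is linear and the `b⁽ᵏ⁾` are biorthogonal to it: `Fbar_n(b⁽ᵏ⁾) = δ_{nk}`. Indeed
`b⁽ᵏ⁾ = u T_k - v T_{k+1}` with `T_k(n) = [k ≤ n] f_{n+1}²`; since `F̂` annihilates `n ↦ f_{n+1}²`,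
`F̂(T_k)` is supported at `k`, and the weights `λ_j - λ_{j-1}` make the sum defining `Fbar_n`
telescope. Hence `Fbar_n(x - ∑_{k ≤ m} α_k b⁽ᵏ⁾) = Fbar_n(x) - [n ≤ m] α_n`: for `α = Fbar(x)` this
is a tail of `Fbar(x) → 0`, and for any convergent expansion, taking `n = k` forces `α_k = Fbar_k(x)`.
-/

noncomputable def fibR : ℕ → ℝ
  | 0 => 1
  | 1 => 1
  | (n + 2) => fibR (n + 1) + fibR n

noncomputable def Fhat (x : ℕ → ℝ) (n : ℕ) : ℝ :=
  fibR n / fibR (n + 1) * x n - fibR (n + 1) / fibR n * (if n = 0 then 0 else x (n - 1))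

noncomputable def Fbar (Λ : ℕ → ℝ) (x : ℕ → ℝ) (n : ℕ) : ℝ :=
  (1 / Λ n) * ∑ k ∈ Finset.range (n + 1),
    (Λ k - if k = 0 then 0 else Λ (k - 1)) *
      (fibR k / fibR (k + 1) * x k -
        fibR (k + 1) / fibR k * (if k = 0 then 0 else x (k - 1)))

noncomputable def bseq (Λ : ℕ → ℝ) (k n : ℕ) : ℝ :=
  if n < k then 0
  else if n = k then
    (Λ k / (Λ k - if k = 0 then 0 else Λ (k - 1))) * (fibR (k + 1) ^ 2 / (fibR k * fibR (k + 1)))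
  else
    (Λ k / (Λ k - if k = 0 then 0 else Λ (k - 1))) * (fibR (n + 1) ^ 2 / (fibR k * fibR (k + 1)))
      - (Λ k / (Λ (k + 1) - Λ k)) * (fibR (n + 1) ^ 2 / (fibR (k + 1) * fibR (k + 2)))

lemma fibR_pos (n : ℕ) : 0 < fibR n := by
  induction n using Nat.twoStepInduction with
  | zero => norm_num [fibR]
  | one => norm_num [fibR]
  | more n ih1 ih2 => rw [fibR]; linarith

noncomputable def lamStep (Λ : ℕ → ℝ) (k : ℕ) : ℝ := Λ k - if k = 0 then 0 else Λ (k - 1)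

lemma lamStep_succ (Λ : ℕ → ℝ) (k : ℕ) : lamStep Λ (k + 1) = Λ (k + 1) - Λ k := by
  simp [lamStep]

lemma lamStep_pos {Λ : ℕ → ℝ} (hmono : StrictMono Λ) (hpos : ∀ k, 0 < Λ k) (k : ℕ) :
    0 < lamStep Λ k := by
  cases k with
  | zero => simpa [lamStep] using hpos 0
  | succ k => rw [lamStep_succ, sub_pos]; exact hmono k.lt_succ_self

lemma Fbar_eq_sum_lamStep_mul_Fhat (Λ x : ℕ → ℝ) (n : ℕ) :
    Fbar Λ x n = 1 / Λ n * ∑ j ∈ range (n + 1), lamStep Λ j * Fhat x j := rfl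

noncomputable def Fhat.linearMap (n : ℕ) : (ℕ → ℝ) →ₗ[ℝ] ℝ where
  toFun x := Fhat x n
  map_add' x y := by simp only [Fhat, Pi.add_apply]; split_ifs <;> ring
  map_smul' c x := by
    simp only [Fhat, Pi.smul_apply, smul_eq_mul, RingHom.id_apply]; split_ifs <;> ring

lemma Fhat.linearMap_apply (x : ℕ → ℝ) (n : ℕ) : Fhat.linearMap n x = Fhat x n := rfl

noncomputable def Fbar.linearMap (Λ : ℕ → ℝ) (n : ℕ) : (ℕ → ℝ) →ₗ[ℝ] ℝ :=
  (1 / Λ n) • ∑ j ∈ range (n + 1), lamStep Λ j • Fhat.linearMap j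

lemma Fbar.linearMap_apply (Λ x : ℕ → ℝ) (n : ℕ) :
    Fbar.linearMap Λ n x = Fbar Λ x n := by
  simp [Fbar.linearMap, Fbar_eq_sum_lamStep_mul_Fhat, Fhat.linearMap]

lemma Fbar_sub_sum (Λ x c : ℕ → ℝ) (b : ℕ → ℕ → ℝ) (s : Finset ℕ) (n : ℕ) :
    Fbar Λ (fun i => x i - ∑ k ∈ s, c k * b k i) n
      = Fbar Λ x n - ∑ k ∈ s, c k * Fbar Λ (b k) n := by
  have hfun : (fun i => x i - ∑ k ∈ s, c k * b k i) = x - ∑ k ∈ s, c k • b k := by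
    ext i; simp [Finset.sum_apply]
  simp only [hfun, ← Fbar.linearMap_apply, map_sub, map_sum, map_smul, smul_eq_mul]

noncomputable def fibTail (k n : ℕ) : ℝ := if k ≤ n then fibR (n + 1) ^ 2 else 0

-- `Fhat` annihilates `n ↦ f_{n+1}²` (as `f_n f_{n+1} - f_{n+1} f_n = 0`),
-- so only the jump at `k` survives.
lemma Fhat_fibTail (k n : ℕ) :
    Fhat (fibTail k) n = if n = k then fibR k * fibR (k + 1) else 0 := by
  have h0 := (fibR_pos n).ne'
  have h1 := (fibR_pos (n + 1)).ne'
  unfold Fhat fibTail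
  rcases lt_trichotomy n k with hlt | rfl | hgt
  · simp [hlt.ne, show ¬ k ≤ n by omega, show ¬ k ≤ n - 1 by omega]
  · rw [if_pos rfl, if_pos le_rfl, ite_eq_left_iff.2 fun hn => if_neg (by omega), mul_zero,
      sub_zero]
    field_simp
  · simp only [hgt.le, hgt.ne', show n ≠ 0 by omega, show k ≤ n - 1 by omega,
      Nat.sub_add_cancel (show 1 ≤ n by omega), if_true, if_false]
    field_simp
    ring

lemma bseq_eq_fibTail (Λ : ℕ → ℝ) (k : ℕ) :
    bseq Λ k = (Λ k / lamStep Λ k / (fibR k * fibR (k + 1))) • fibTail k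
      - (Λ k / lamStep Λ (k + 1) / (fibR (k + 1) * fibR (k + 2))) • fibTail (k + 1) := by
  ext n
  rw [lamStep_succ, Pi.sub_apply, Pi.smul_apply, Pi.smul_apply, smul_eq_mul, smul_eq_mul]
  unfold bseq fibTail lamStep
  rcases lt_trichotomy n k with hlt | rfl | hgt
  · simp [hlt, show ¬ k ≤ n by omega, show ¬ k + 1 ≤ n by omega]
  · simp only [lt_irrefl, le_refl, if_true, if_false, show ¬ n + 1 ≤ n by omega]
    ring
  · simp only [show ¬ n < k by omega, hgt.ne', hgt.le, show k + 1 ≤ n by omega, if_true,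
      if_false]
    ring

lemma lamStep_mul_Fhat_bseq {Λ : ℕ → ℝ} (hmono : StrictMono Λ) (hpos : ∀ k, 0 < Λ k)
    (k j : ℕ) :
    lamStep Λ j * Fhat (bseq Λ k) j =
      (if j = k then Λ k else 0) - if j = k + 1 then Λ k else 0 := by
  have hfk := (fibR_pos k).ne'
  have hfk1 := (fibR_pos (k + 1)).ne'
  have hfk2 := (fibR_pos (k + 2)).ne'
  have hd := (lamStep_pos hmono hpos k).ne'
  have hd1 := (lamStep_pos hmono hpos (k + 1)).ne'
  have hlin : Fhat (bseq Λ k) j =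
      Λ k / lamStep Λ k / (fibR k * fibR (k + 1)) * Fhat (fibTail k) j
      - Λ k / lamStep Λ (k + 1) / (fibR (k + 1) * fibR (k + 2)) * Fhat (fibTail (k + 1)) j := by
    rw [bseq_eq_fibTail, ← Fhat.linearMap_apply, map_sub, map_smul, map_smul]
    rfl
  rw [hlin, Fhat_fibTail, Fhat_fibTail]
  by_cases hjk : j = k
  · subst hjk
    simp only [↓reduceIte, Nat.left_eq_add, one_ne_zero, mul_zero, sub_zero]
    field_simp
  · by_cases hjk1 : j = k + 1
    · subst hjk1
      simp only [Nat.add_eq_left, one_ne_zero, ↓reduceIte, mul_zero, zero_sub]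
      field_simp
    · simp [hjk, hjk1]

lemma Fbar_bseq {Λ : ℕ → ℝ} (hmono : StrictMono Λ) (hpos : ∀ k, 0 < Λ k) (k n : ℕ) :
    Fbar Λ (bseq Λ k) n = if n = k then 1 else 0 := by
  simp only [Fbar_eq_sum_lamStep_mul_Fhat, lamStep_mul_Fhat_bseq hmono hpos, sum_sub_distrib,
    sum_ite_eq', mem_range]
  have hn := (hpos n).ne'
  rcases lt_trichotomy n k with hlt | rfl | hgt
  · simp [show ¬ k < n + 1 by omega, show ¬ k + 1 < n + 1 by omega, hlt.ne]
  · simp [hn]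
  · simp [show k < n + 1 by omega, show k + 1 < n + 1 by omega, hgt.ne']

lemma Fbar_sub_partial_sum {Λ : ℕ → ℝ} (hmono : StrictMono Λ) (hpos : ∀ k, 0 < Λ k)
    (x c : ℕ → ℝ) (m n : ℕ) :
    Fbar Λ (fun i => x i - ∑ k ∈ range (m + 1), c k * bseq Λ k i) n
      = Fbar Λ x n - if n ≤ m then c n else 0 := by
  simp only [Fbar_sub_sum, Fbar_bseq hmono hpos, mul_ite, mul_one, mul_zero, sum_ite_eq,
    mem_range, Nat.lt_succ_iff]

theorem bseq_schauder_basis_general (Λ : ℕ → ℝ) (hmono : StrictMono Λ) (hpos : ∀ k, 0 < Λ k)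
    (x : ℕ → ℝ)
    (hx : Tendsto (Fbar Λ x) atTop (nhds 0)) :
    (∀ ε : ℝ, 0 < ε → ∃ M, ∀ m, M ≤ m → ∀ n,
      |Fbar Λ (fun i => x i - ∑ k ∈ Finset.range (m + 1), Fbar Λ x k * bseq Λ k i) n| ≤ ε) ∧
    (∀ β : ℕ → ℝ,
      (∀ ε : ℝ, 0 < ε → ∃ M, ∀ m, M ≤ m → ∀ n,
        |Fbar Λ (fun i => x i - ∑ k ∈ Finset.range (m + 1), β k * bseq Λ k i) n| ≤ ε) →
      ∀ k, β k = Fbar Λ x k) := by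
  simp only [Fbar_sub_partial_sum hmono hpos]
  refine ⟨fun ε hε => ?_, fun β hβ k => ?_⟩
  · obtain ⟨M, hM⟩ := Metric.tendsto_atTop.mp hx ε hε
    refine ⟨M, fun m hm n => ?_⟩
    split_ifs with hnm
    · simpa using hε.le
    · simpa [Real.dist_eq] using (hM n (by omega)).le
  · refine (eq_of_forall_dist_le fun ε hε => ?_).symm
    obtain ⟨M, hM⟩ := hβ ε hε
    simpa [Real.dist_eq, le_max_right] using hM (max M k) (le_max_left M k) k

theorem bseq_schauder_basis (Λ : ℕ → ℝ) (hmono : StrictMono Λ) (hpos : ∀ k, 0 < Λ k)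
    (hlim : Tendsto Λ atTop atTop) (x : ℕ → ℝ)
    (hx : Tendsto (Fbar Λ x) atTop (nhds 0)) :
    (∀ ε : ℝ, 0 < ε → ∃ M, ∀ m, M ≤ m → ∀ n,
      |Fbar Λ (fun i => x i - ∑ k ∈ Finset.range (m + 1), Fbar Λ x k * bseq Λ k i) n| ≤ ε) ∧
    (∀ β : ℕ → ℝ,
      (∀ ε : ℝ, 0 < ε → ∃ M, ∀ m, M ≤ m → ∀ n,
        |Fbar Λ (fun i => x i - ∑ k ∈ Finset.range (m + 1), β k * bseq Λ k i) n| ≤ ε) →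
      ∀ k, β k = Fbar Λ x k) :=
  bseq_schauder_basis_general Λ hmono hpos x hx
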